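/- Let K be a field of characteristic p > 2 and let V = (K[t]/(t^p))/K·1 ⊕ (K[t]/(t^p)) be a superspace with even part the first summand (classes of f_0 modulo constants) and odd part the second (elements f_1, representing f_1·θ). Define the even bilinear form ((f_0,f_1),(g_0,g_1)) = ∫(f_0·g_0' - f_1·g_1), where ∫ takes the coefficient of t^{p-1}. Then this form is well defined, antisymmetric on the even part, symmetric on the odd part, zero between parts, and nondegenerate. -/

import Mathlib

/-! In characteristic `p` the functional `∫ h = h.coeff (p - 1)` kills every derivative, since
`(h').coeff (p - 1) = p · h.coeff p = 0`. Integration by parts then gives antisymmetry of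
`∫ f₀ g₀'` and well-definedness modulo constants. Nondegeneracy is read off the monomials:
pairing `f` with `t^(p-1-n)` (odd part) or with `t^(p-n)`, whose derivative is `(p-n) t^(p-n-1)`
with `p - n` a unit for `0 < n < p` (even part), extracts `f.coeff n`. -/

open Polynomial

namespace Polynomial

theorem coeff_derivative_pred_eq_zero_of_charP {R : Type*} [Semiring R] (p : ℕ) [CharP R p]
    (hp : 0 < p) (g : R[X]) : (derivative g).coeff (p - 1) = 0 := by
  have hcast : ((p - 1 : ℕ) : R) + 1 = 0 := by
    rw [← Nat.cast_add_one, Nat.sub_add_cancel hp, CharP.cast_eq_zero]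
  rw [coeff_derivative, hcast, mul_zero]

theorem coeff_mul_derivative_pred_eq_neg {R : Type*} [CommRing R] (p : ℕ) [CharP R p]
    (hp : 0 < p) (f g : R[X]) :
    (f * derivative g).coeff (p - 1) = -(g * derivative f).coeff (p - 1) := by
  have h := coeff_derivative_pred_eq_zero_of_charP p hp (f * g)
  rw [derivative_mul, coeff_add, mul_comm (derivative f)] at h
  exact eq_neg_of_add_eq_zero_right h

theorem coeff_mul_X_pow_sub_pred {R : Type*} [Semiring R] {p n : ℕ} (hn : n < p) (f : R[X]) :
    (f * X ^ (p - 1 - n)).coeff (p - 1) = f.coeff n := by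
  rw [coeff_mul_X_pow', if_pos (by omega), show p - 1 - (p - 1 - n) = n by omega]

theorem ext_of_degree_lt {R : Type*} [Semiring R] {p : ℕ} {f g : R[X]} (hf : f.degree < p)
    (hg : g.degree < p) (h : ∀ n < p, f.coeff n = g.coeff n) : f = g := by
  ext n
  by_cases hn : n < p
  · exact h n hn
  · have hpn : (p : WithBot ℕ) ≤ n := by exact_mod_cast not_lt.mp hn
    rw [coeff_eq_zero_of_degree_lt (hf.trans_le hpn), coeff_eq_zero_of_degree_lt (hg.trans_le hpn)]

theorem eq_zero_of_forall_coeff_mul_pred_eq_zero {R : Type*} [Semiring R] {p : ℕ} {f : R[X]}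
    (hf : f.degree < p) (h : ∀ g : R[X], g.degree < p → (f * g).coeff (p - 1) = 0) : f = 0 := by
  refine ext_of_degree_lt hf (by simp) fun n hn => ?_
  rw [← coeff_mul_X_pow_sub_pred hn, coeff_zero]
  exact h _ ((degree_X_pow_le _).trans_lt (by exact_mod_cast (by omega : p - 1 - n < p)))

theorem eq_C_of_forall_coeff_mul_derivative_pred_eq_zero {K : Type*} [Field K] {p : ℕ}
    [CharP K p] (hp : 0 < p) {f : K[X]} (hf : f.degree < p)
    (h : ∀ g : K[X], g.degree < p → (f * derivative g).coeff (p - 1) = 0) :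
    f = C (f.coeff 0) := by
  refine ext_of_degree_lt hf ((degree_C_le).trans_lt (by exact_mod_cast hp))
    fun n hn => ?_
  rcases Nat.eq_zero_or_pos n with rfl | hn0
  · rw [coeff_C_zero]
  rw [coeff_C, if_neg hn0.ne']
  have hpn_ne : ((p - n : ℕ) : K) ≠ 0 := by
    rw [Ne, CharP.cast_eq_zero_iff K p]
    exact fun hdvd => absurd (Nat.le_of_dvd (by omega) hdvd) (by omega)
  have hpair := h (X ^ (p - n)) (by rw [degree_X_pow]; exact_mod_cast (by omega : p - n < p))
  rw [derivative_X_pow, mul_left_comm, coeff_C_mul, show p - n - 1 = p - 1 - n by omega,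
    coeff_mul_X_pow_sub_pred hn] at hpair
  exact (mul_eq_zero.mp hpair).resolve_left hpn_ne

end Polynomial

/-- Over a field `K` of characteristic `p > 2`, consider the superspace
`V = (K[t]/(t^p))/K·1 ⊕ (K[t]/(t^p))` (even part: classes of `f₀` modulo constants;
odd part: elements `f₁`, standing for `f₁·θ`), with elements represented by pairs
`(f₀, f₁)` of polynomials of degree `< p`.  The even bilinear form
`((f₀,f₁),(g₀,g₁)) = ∫(f₀·g₀' - f₁·g₁)`, where `∫` takes the coefficient of `t^(p-1)`,
is well defined (independent of the constants added to the even components),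
antisymmetric on the even part, symmetric on the odd part, zero between the parts,
and nondegenerate. -/
theorem stmt_4 (K : Type*) [Field K] (p : ℕ) [CharP K p] (hp : 2 < p) :
    -- well-definedness: adding constants to the even components changes nothing
    (∀ f₀ f₁ g₀ g₁ : Polynomial K, f₀.degree < p → g₀.degree < p → ∀ c d : K,
      ((f₀ + C c) * derivative (g₀ + C d)).coeff (p - 1) - (f₁ * g₁).coeff (p - 1)
        = (f₀ * derivative g₀).coeff (p - 1) - (f₁ * g₁).coeff (p - 1)) ∧
    -- antisymmetry on the even part
    (∀ f₀ g₀ : Polynomial K, f₀.degree < p → g₀.degree < p →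
      (f₀ * derivative g₀).coeff (p - 1) - ((0 : Polynomial K) * 0).coeff (p - 1)
        = -((g₀ * derivative f₀).coeff (p - 1) - ((0 : Polynomial K) * 0).coeff (p - 1))) ∧
    -- symmetry on the odd part
    (∀ f₁ g₁ : Polynomial K, f₁.degree < p → g₁.degree < p →
      (derivative (0 : Polynomial K) * 0).coeff (p - 1) - (f₁ * g₁).coeff (p - 1)
        = (derivative (0 : Polynomial K) * 0).coeff (p - 1) - (g₁ * f₁).coeff (p - 1)) ∧
    -- the pairing between the even and odd parts vanishes
    (∀ f₀ g₁ : Polynomial K, f₀.degree < p → g₁.degree < p →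
      (f₀ * derivative (0 : Polynomial K)).coeff (p - 1)
        - ((0 : Polynomial K) * g₁).coeff (p - 1) = 0) ∧
    -- nondegeneracy: an element pairing to zero with everything is zero in V
    (∀ f₀ f₁ : Polynomial K, f₀.degree < p → f₁.degree < p →
      (∀ g₀ g₁ : Polynomial K, g₀.degree < p → g₁.degree < p →
        (f₀ * derivative g₀).coeff (p - 1) - (f₁ * g₁).coeff (p - 1) = 0) →
      (∃ c : K, f₀ = C c) ∧ f₁ = 0) := by
  have hp0 : 0 < p := by omega
  have hdeg0 : (0 : K[X]).degree < p := by simp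
  refine ⟨fun f₀ f₁ g₀ g₁ _ _ c d => ?_, fun f₀ g₀ _ _ => ?_, fun f₁ g₁ _ _ => by rw [mul_comm f₁],
    fun _ _ _ _ => by simp, fun f₀ f₁ hf₀ hf₁ h => ⟨⟨f₀.coeff 0, ?_⟩, ?_⟩⟩
  · rw [derivative_add, derivative_C, add_zero, add_mul, coeff_add, coeff_C_mul,
      coeff_derivative_pred_eq_zero_of_charP p hp0, mul_zero, add_zero]
  · simpa using coeff_mul_derivative_pred_eq_neg p hp0 f₀ g₀
  · exact eq_C_of_forall_coeff_mul_derivative_pred_eq_zero hp0 hf₀ fun g hg => by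
      simpa using h g 0 hg hdeg0
  · exact eq_zero_of_forall_coeff_mul_pred_eq_zero hf₁ fun g hg => by
      simpa using h 0 g hdeg0 hg
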